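/- arXiv:1802.07991 — 3 statements merged into one kernel-verified Lean document; each statement's English description precedes it below -/
import Mathlib

section
/- Let T be a finite tree with an even number of vertices. Then the set of edges e of T such that T − e consists of two components each of odd order forms an odd factor of T, i.e., every vertex of T is incident with an odd number of such edges. -/
/-! Deleting the edge `vw` of the tree leaves the branch `B_w` of `w` and its complement; as `|V|`
is even, both are odd exactly when `|B_w|` is odd. The branches at the neighbours of `v` partition
`V ∖ {v}`, so `∑ |B_w| = |V| - 1` is odd, and therefore an odd number of the `|B_w|` are odd. -/

open Finset
open scoped Classical

/-- A multigraph on vertex type `V` with edge index type `E`: each edge `e` has two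
distinct endpoints given as an unordered pair `ends e` (no loops, multiple edges allowed). -/
structure Multigraph (V : Type) (E : Type) where
  ends : E → Sym2 V
  no_loops : ∀ e, ¬ (ends e).IsDiag

namespace Multigraph

variable {V E : Type} [Fintype V] [Fintype E]

/-- The number of edges from the edge set `F` incident with `v`. -/
noncomputable def degIn (G : Multigraph V E) (F : Finset E) (v : V) : ℕ :=
  (F.filter (fun e => v ∈ G.ends e)).card

/-- The degree of `v` in `G`. -/
noncomputable def deg (G : Multigraph V E) (v : V) : ℕ := G.degIn Finset.univ v

/-- The underlying simple graph of `G`. -/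
def simple (G : Multigraph V E) : SimpleGraph V where
  Adj x y := x ≠ y ∧ ∃ e : E, G.ends e = s(x, y)
  symm := by
    constructor
    rintro x y ⟨hxy, e, he⟩
    exact ⟨hxy.symm, e, by rw [he, Sym2.eq_swap]⟩
  loopless := ⟨fun x h => h.1 rfl⟩

/-- `C` is the vertex set of a connected component of the subgraph of `G` induced by `S`. -/
def IsComponentOf (G : Multigraph V E) (S : Set V) (C : Finset V) : Prop :=
  ∃ v ∈ S, ∀ x : V, x ∈ C ↔
    Relation.ReflTransGen (fun a b => a ∈ S ∧ b ∈ S ∧ (G.simple).Adj a b) v x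

/-- The number of edges of `G` with one endpoint in `U₁` and the other in `U₂`. -/
noncomputable def eBetween (G : Multigraph V E) (U₁ U₂ : Finset V) : ℕ :=
  (Finset.univ.filter (fun e : E => ∃ x ∈ U₁, ∃ y ∈ U₂, G.ends e = s(x, y))).card

/-- The set of vertices of `G` of odd degree. -/
noncomputable def oddVerts (G : Multigraph V E) : Finset V :=
  Finset.univ.filter (fun v => Odd (G.deg v))

/-- The set of vertices of `G` of even degree. -/
noncomputable def evenVerts (G : Multigraph V E) : Finset V :=
  Finset.univ.filter (fun v => Even (G.deg v))

/-- `F` forms an odd subgraph: every vertex incident with an edge of `F` has odd `F`-degree. -/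
def IsOddSet (G : Multigraph V E) (F : Finset E) : Prop :=
  ∀ v : V, (∃ e ∈ F, v ∈ G.ends e) → Odd (G.degIn F v)

/-- `F` forms an even subgraph: every vertex has even `F`-degree. -/
def IsEvenSet (G : Multigraph V E) (F : Finset E) : Prop :=
  ∀ v : V, Even (G.degIn F v)

end Multigraph

open Multigraph

namespace SimpleGraph

variable {V : Type*} {G T : SimpleGraph V} {v w x : V}

lemma Walk.reachable_deleteEdges_of_notMem_support (p : G.Walk v x) (hw : w ∉ p.support) :
    (G.deleteEdges {s(v, w)}).Reachable v x :=
  ⟨p.toDeleteEdge _ fun he => hw (p.snd_mem_support_of_mem_edges he)⟩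

lemma IsBridge.reachable_deleteEdges_iff_mem_support (h : G.IsBridge s(v, w)) {p : G.Walk v x}
    (hp : p.IsTrail) : (G.deleteEdges {s(v, w)}).Reachable w x ↔ w ∈ p.support := by
  have hvw : ¬ (G.deleteEdges {s(v, w)}).Reachable v w := isBridge_iff.mp h
  constructor
  · intro hwx
    by_contra hw
    exact hvw ((p.reachable_deleteEdges_of_notMem_support hw).trans hwx.symm)
  · intro hw
    by_contra hwx
    exact hp.not_mem_support_of_not_reachable hvw (fun h' => hwx h'.symm) hw

lemma IsBridge.reachable_deleteEdges_or (h : G.IsBridge s(v, w)) (hx : G.Reachable v x) :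
    (G.deleteEdges {s(v, w)}).Reachable v x ∨ (G.deleteEdges {s(v, w)}).Reachable w x := by
  obtain ⟨p, hp⟩ := hx.exists_isPath
  by_cases hw : w ∈ p.support
  · exact .inr ((h.reachable_deleteEdges_iff_mem_support hp.isTrail).mpr hw)
  · exact .inl (p.reachable_deleteEdges_of_notMem_support hw)

lemma IsAcyclic.reachable_deleteEdges_iff_snd_eq (hT : T.IsAcyclic) (hvw : T.Adj v w)
    {p : T.Walk v x} (hp : p.IsPath) (hx : x ≠ v) :
    (T.deleteEdges {s(v, w)}).Reachable w x ↔ p.snd = w := by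
  rw [(isAcyclic_iff_forall_adj_isBridge.mp hT hvw).reachable_deleteEdges_iff_mem_support
    hp.isTrail]
  exact ⟨fun hw => (hT.eq_snd_of_adj_start hp hvw hw).symm,
    fun hw => hw ▸ List.mem_of_mem_tail (p.snd_mem_tail_support (Walk.not_nil_of_ne hx.symm))⟩

lemma forall_odd_card_connectedComponent_iff_of_reachable_or [Fintype V]
    [DecidableRel G.Reachable] (heven : Even (Fintype.card V))
    (hvw : ¬ G.Reachable v w) (hcover : ∀ x, G.Reachable v x ∨ G.Reachable w x) :
    (∀ c : G.ConnectedComponent, Odd (Nat.card {x // G.connectedComponentMk x = c})) ↔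
      Odd #{x | G.Reachable w x} := by
  have card_component : ∀ u, Nat.card {x // G.connectedComponentMk x = G.connectedComponentMk u}
      = #{x | G.Reachable u x} := by
    intro u
    rw [Nat.card_eq_fintype_card, Fintype.card_subtype]
    simp only [ConnectedComponent.eq, reachable_comm]
  have hsplit : #{x | G.Reachable v x} + #{x | G.Reachable w x} = Fintype.card V := by
    rw [← card_union_of_disjoint, ← card_univ]
    · congr 1
      ext x
      simpa using hcover x
    · exact disjoint_filter.mpr fun x _ hv hw => hvw (hv.trans hw.symm)
  constructor
  · intro h
    simpa only [card_component] using h (G.connectedComponentMk w)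
  · intro hodd c
    induction c using ConnectedComponent.ind with
    | h u =>
      rcases hcover u with hu | hu
      · rw [ConnectedComponent.eq.mpr hu.symm, card_component,
          show #{x | G.Reachable v x} = Fintype.card V - #{x | G.Reachable w x} by omega]
        exact Nat.Even.sub_odd (by omega) heven hodd
      · rw [ConnectedComponent.eq.mpr hu.symm, card_component]
        exact hodd

lemma IsAcyclic.sum_card_reachable_deleteEdges [Fintype V] (hconn : T.Connected)
    (hT : T.IsAcyclic) (v : V) :
    ∑ w ∈ T.neighborFinset v, #{x | (T.deleteEdges {s(v, w)}).Reachable w x}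
      = Fintype.card V - 1 := by
  -- The branch at `w` is the fibre over `w` of `x ↦ (p x).snd`, the first step from `v` to `x`.
  choose p hp using fun x => (hconn v x).exists_isPath
  have hfiber : ∀ w ∈ T.neighborFinset v, #{x | (T.deleteEdges {s(v, w)}).Reachable w x}
      = #{x ∈ univ.erase v | (p x).snd = w} := by
    intro w hw
    congr 1
    ext x
    simp only [mem_filter, mem_univ, true_and, mem_erase, and_true]
    by_cases hx : x = v
    · subst hx
      simpa using fun h => (isAcyclic_iff_forall_adj_isBridge.mp hT
        ((mem_neighborFinset _ _ _).mp hw)) h.symm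
    · simp only [hx, ne_eq, not_false_eq_true, true_and]
      exact hT.reachable_deleteEdges_iff_snd_eq ((mem_neighborFinset _ _ _).mp hw) (hp x) hx
  rw [sum_congr rfl hfiber, ← card_eq_sum_card_fiberwise (f := fun x => (p x).snd),
    card_erase_of_mem (mem_univ v), card_univ]
  intro x hx
  simpa using (p x).adj_snd (Walk.not_nil_of_ne (mem_erase.mp hx).1.symm)

lemma natCard_incident_edges_eq_card_filter_neighborFinset (v : V) (P : Sym2 V → Prop)
    [DecidablePred P] [Fintype (T.neighborSet v)] :
    Nat.card {e : Sym2 V // e ∈ T.edgeSet ∧ v ∈ e ∧ P e} =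
      #{w ∈ T.neighborFinset v | P s(v, w)} := by
  have himage : {e : Sym2 V | e ∈ T.edgeSet ∧ v ∈ e ∧ P e}
      = (fun w => s(v, w)) '' ↑({w ∈ T.neighborFinset v | P s(v, w)}) := by
    ext e
    constructor
    · rintro ⟨he, hv, hP⟩
      obtain ⟨w, rfl⟩ := Sym2.mem_iff_exists.mp hv
      exact ⟨w, by simpa using ⟨he, hP⟩, rfl⟩
    · rintro ⟨w, hw, rfl⟩
      simp only [coe_filter, mem_neighborFinset] at hw
      exact ⟨hw.1, Sym2.mem_mk_left v w, hw.2⟩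
  rw [← Set.ncard_coe_finset, ← Set.ncard_image_of_injective _ fun _ _ => Sym2.congr_right.mp,
    ← himage]
  rfl

end SimpleGraph

open SimpleGraph

theorem stmt2 {V : Type} [Fintype V] (T : SimpleGraph V)
    (hconn : T.Connected) (hacyc : T.IsAcyclic) (heven : Even (Nat.card V)) (v : V) :
    Odd (Nat.card {e : Sym2 V // e ∈ T.edgeSet ∧ v ∈ e ∧
      ∀ c : (T.deleteEdges {e}).ConnectedComponent,
        Odd (Nat.card {x : V // (T.deleteEdges {e}).connectedComponentMk x = c})}) := by
  rw [Nat.card_eq_fintype_card] at heven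
  have hbridge : ∀ w ∈ T.neighborFinset v, T.IsBridge s(v, w) := fun w hw =>
    isAcyclic_iff_forall_adj_isBridge.mp hacyc ((mem_neighborFinset _ _ _).mp hw)
  rw [natCard_incident_edges_eq_card_filter_neighborFinset, filter_congr fun w hw =>
      forall_odd_card_connectedComponent_iff_of_reachable_or heven
        (isBridge_iff.mp (hbridge w hw))
        fun x => (hbridge w hw).reachable_deleteEdges_or (hconn v x),
    ← odd_sum_iff_odd_card_odd, hacyc.sum_card_reachable_deleteEdges hconn v]
  exact Nat.Even.sub_odd (Fintype.card_pos_iff.mpr ⟨v⟩) heven odd_one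
end

section
/- A finite multigraph G can be decomposed into an even subgraph and an odd subgraph if and only if every connected component of the subgraph of G induced by the set of odd-degree vertices of G has an even number of vertices. -/
/-!
With `K := Fᶜ`, a decomposition is an edge set `K` inside the subgraph induced by the set `T` of
odd-degree vertices whose odd-degree vertices are exactly `T` (a `T`-join within `⟨T⟩`).

If such `K` exists, every `K`-edge meets a component `C` of `⟨T⟩` in `0` or `2` ends, so
`∑ v ∈ C, deg_K v` is even while every term is odd; hence `|C|` is even. Conversely, work over
`ZMod 2`: for each `u ∈ T` take the edge vector of a path in `⟨T⟩` from a fixed representative of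
the component of `u` to `u`, and add them up. A representative is hit once for each `T`-vertex of
its component, an even number of times, so the boundary of the sum is the indicator of `T`.
-/

open Finset
open scoped Classical

open Multigraph

namespace Multigraph

section Parity

variable {V E : Type} [Fintype E] (G : Multigraph V E)

lemma deg_eq_degIn_add_degIn_compl (K : Finset E) (v : V) :
    G.deg v = G.degIn K v + G.degIn Kᶜ v := by
  rw [deg, degIn, degIn, degIn, ← card_union_of_disjoint
    (disjoint_filter_filter disjoint_compl_right), ← filter_union, union_compl]

/-- `K` is a `T`-join in the sense of combinatorial optimisation. -/
def IsJoin (T : Set V) (K : Finset E) : Prop := ∀ v, Odd (G.degIn K v) ↔ v ∈ T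

def edgesWithin (T : Set V) : Set E := {e | ∀ x ∈ G.ends e, x ∈ T}

lemma isEvenSet_compl_and_isOddSet_iff (K : Finset E) :
    G.IsEvenSet Kᶜ ∧ G.IsOddSet K ↔
      ↑K ⊆ G.edgesWithin {v | Odd (G.deg v)} ∧ G.IsJoin {v | Odd (G.deg v)} K := by
  have hdeg v : Odd (G.deg v) ↔ (Odd (G.degIn K v) ↔ Even (G.degIn Kᶜ v)) := by
    rw [G.deg_eq_degIn_add_degIn_compl K, Nat.odd_add]
  constructor
  · rintro ⟨hEven, hOdd⟩
    have hparity v : Odd (G.degIn K v) ↔ Odd (G.deg v) := by simp [hdeg, hEven v]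
    exact ⟨fun e he x hx => (hparity x).1 (hOdd x ⟨e, he, hx⟩), hparity⟩
  · rintro ⟨hK, hparity⟩
    refine ⟨fun v => ?_, fun v ⟨e, he, hv⟩ => (hparity v).2 (hK he v hv)⟩
    have hdeg_v := hdeg v
    have hparity_v : Odd (G.degIn K v) ↔ Odd (G.deg v) := hparity v
    tauto

end Parity

section Components

variable {V E : Type} (G : Multigraph V E) (T : Set V)

lemma exists_ends_eq (e : E) : ∃ a b : V, a ≠ b ∧ G.ends e = s(a, b) := by
  induction h : G.ends e using Sym2.ind with
  | h a b => exact ⟨a, b, fun hab => G.no_loops e (by rw [h, hab]; rfl), rfl⟩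

/-- Unlike `SimpleGraph.induce`, this keeps the vertex type `V`; vertices outside `T` are
isolated. -/
def inducedOn : SimpleGraph V where
  Adj a b := a ∈ T ∧ b ∈ T ∧ G.simple.Adj a b
  symm := ⟨fun _ _ h => ⟨h.2.1, h.1, h.2.2.symm⟩⟩
  loopless := ⟨fun _ h => h.2.2.ne rfl⟩

variable {G T}

lemma isComponentOf_iff {C : Finset V} :
    G.IsComponentOf T C ↔ ∃ v ∈ T, ∀ x, x ∈ C ↔ (G.inducedOn T).Reachable v x := by
  simp only [IsComponentOf, SimpleGraph.reachable_iff_reflTransGen]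
  rfl

lemma mem_of_reachable {a b : V} (h : (G.inducedOn T).Reachable a b) (ha : a ∈ T) : b ∈ T := by
  rw [SimpleGraph.reachable_iff_reflTransGen] at h
  induction h with
  | refl => exact ha
  | tail _ hbc => exact hbc.2.1

lemma mem_of_mem_ends_of_mem_edgesWithin {C : Finset V} (hC : G.IsComponentOf T C) {e : E}
    (he : e ∈ G.edgesWithin T) {x y : V} (hx : x ∈ G.ends e) (hy : y ∈ G.ends e) (hxC : x ∈ C) :
    y ∈ C := by
  obtain ⟨v, -, hv⟩ := isComponentOf_iff.1 hC
  obtain rfl | hxy := eq_or_ne x y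
  · exact hxC
  have hadj : (G.inducedOn T).Adj x y :=
    ⟨he x hx, he y hy, hxy, e, (Sym2.mem_and_mem_iff hxy).1 ⟨hx, hy⟩⟩
  exact (hv y).2 (((hv x).1 hxC).trans hadj.reachable)

lemma even_card_filter_mem_ends {C : Finset V} (e : E)
    (hC : ∀ x ∈ G.ends e, ∀ y ∈ G.ends e, x ∈ C → y ∈ C) : Even #{x ∈ C | x ∈ G.ends e} := by
  obtain ⟨a, b, hab, he⟩ := G.exists_ends_eq e
  simp only [he, Sym2.mem_iff] at hC ⊢
  by_cases haC : a ∈ C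
  · have hbC : b ∈ C := hC a (Or.inl rfl) b (Or.inr rfl) haC
    have : {x ∈ C | x = a ∨ x = b} = {a, b} := by
      ext x; simp only [mem_filter, mem_insert, mem_singleton]; aesop
    rw [this, card_pair hab]
    exact even_two
  · have : {x ∈ C | x = a ∨ x = b} = ∅ := by
      ext x; simp only [mem_filter, notMem_empty, iff_false]
      rintro ⟨hxC, rfl | rfl⟩
      · exact haC hxC
      · exact haC (hC x (Or.inr rfl) a (Or.inl rfl) hxC)
    rw [this, card_empty]
    exact Even.zero

lemma even_card_of_isComponentOf {K : Finset E} (hK : ↑K ⊆ G.edgesWithin T)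
    (hodd : ∀ v ∈ T, Odd (G.degIn K v)) {C : Finset V} (hC : G.IsComponentOf T C) :
    Even #C := by
  have hCT : ∀ v ∈ C, v ∈ T := by
    obtain ⟨v, hvT, hv⟩ := isComponentOf_iff.1 hC
    exact fun x hx => mem_of_reachable ((hv x).1 hx) hvT
  have hsum : Even (∑ v ∈ C, G.degIn K v) := by
    rw [show ∑ v ∈ C, G.degIn K v = ∑ e ∈ K, #{x ∈ C | x ∈ G.ends e} from
      sum_card_bipartiteAbove_eq_sum_card_bipartiteBelow _]
    exact even_sum _ fun e he => G.even_card_filter_mem_ends e fun x hx y hy =>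
      mem_of_mem_ends_of_mem_edgesWithin hC (hK he) hx hy
  rw [← ZMod.natCast_eq_zero_iff_even, Nat.cast_sum] at hsum
  rw [← ZMod.natCast_eq_zero_iff_even, ← hsum, card_eq_sum_ones, Nat.cast_sum]
  exact sum_congr rfl fun v hv => by
    rw [Nat.cast_one, ZMod.natCast_eq_one_iff_odd.2 (hodd v (hCT v hv))]

end Components

section Joins

open Matrix

variable {V E : Type} [Fintype E] (G : Multigraph V E)

noncomputable def incMatrix : Matrix V E (ZMod 2) :=
  Matrix.of fun v e => if v ∈ G.ends e then 1 else 0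

lemma natCast_degIn_filter_ne_zero (f : E → ZMod 2) (v : V) :
    (G.degIn {e | f e ≠ 0} v : ZMod 2) = (G.incMatrix *ᵥ f) v := by
  have hf e : f e = if f e ≠ 0 then 1 else 0 := by
    generalize f e = x; revert x; decide
  rw [degIn, filter_filter, card_filter, Nat.cast_sum, mulVec, dotProduct]
  refine sum_congr rfl fun e _ => ?_
  rw [hf e]
  by_cases h1 : f e ≠ 0 <;> by_cases h2 : v ∈ G.ends e <;> simp [incMatrix, h1, h2]

lemma incMatrix_mulVec_single {e : E} {a b : V} (hab : a ≠ b) (he : G.ends e = s(a, b)) :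
    G.incMatrix *ᵥ Pi.single e 1 = Pi.single a 1 + Pi.single b 1 := by
  ext v
  by_cases hva : v = a <;> by_cases hvb : v = b <;>
    simp_all [incMatrix]

def supportedWithin (T : Set V) : Submodule (ZMod 2) (E → ZMod 2) where
  carrier := {f | ∀ e ∉ G.edgesWithin T, f e = 0}
  add_mem' hf hg e he := by simp [hf e he, hg e he]
  zero_mem' _ _ := rfl
  smul_mem' c f hf e he := by simp [hf e he]

variable {G} {T : Set V}

lemma exists_mulVec_eq_single_add_single {a b : V} (h : (G.inducedOn T).Reachable a b) :
    ∃ f ∈ G.supportedWithin T,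
      G.incMatrix *ᵥ f = Pi.single a 1 + Pi.single b 1 := by
  obtain ⟨p⟩ := h
  induction p with
  | nil => exact ⟨0, zero_mem _, by rw [mulVec_zero, ZModModule.add_self]⟩
  | @cons a c b hadj _ ih =>
    obtain ⟨haT, hcT, hac, e, he⟩ := hadj
    obtain ⟨f, hfT, hf⟩ := ih
    have heT : e ∈ G.edgesWithin T := by
      intro x hx
      rw [he, Sym2.mem_iff] at hx
      rcases hx with rfl | rfl <;> assumption
    refine ⟨Pi.single e 1 + f, add_mem ?_ hfT, ?_⟩
    · intro e' he'
      rw [Pi.single_apply, if_neg (by rintro rfl; exact he' heT)]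
    · rw [mulVec_add, G.incMatrix_mulVec_single hac he, hf, add_comm (Pi.single c 1),
        add_add_add_comm, ZModModule.add_self, add_zero]

variable [Fintype V]

lemma exists_mulVec_eq_indicator (hT : ∀ C, G.IsComponentOf T C → Even #C) :
    ∃ f ∈ G.supportedWithin T, G.incMatrix *ᵥ f = T.indicator 1 := by
  set H := G.inducedOn T
  let r : V → V := fun u => (H.connectedComponentMk u).out
  have hr u : H.Reachable (r u) u := SimpleGraph.ConnectedComponent.eq.1 (Quot.out_eq _)
  have hr_eq u w : r u = r w ↔ H.Reachable u w :=
    ⟨fun h => (hr u).symm.trans (h ▸ hr w),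
      fun h => congrArg Quot.out (SimpleGraph.ConnectedComponent.sound h)⟩
  have hcard v : Even #{u | u ∈ T ∧ v = r u} := by
    by_cases hv : ∃ u₀ ∈ T, v = r u₀
    · obtain ⟨u₀, hu₀, rfl⟩ := hv
      rw [filter_congr fun u _ => show u ∈ T ∧ r u₀ = r u ↔ H.Reachable u₀ u by
        rw [hr_eq]; exact ⟨And.right, fun h => ⟨mem_of_reachable h hu₀, h⟩⟩]
      exact hT _ (isComponentOf_iff.2 ⟨u₀, hu₀, fun x => by simp [H]⟩)
    · push Not at hv
      rw [filter_false_of_mem fun u _ h => hv u h.1 h.2, card_empty]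
      exact Even.zero
  choose f hfT hf using fun u => exists_mulVec_eq_single_add_single (hr u)
  refine ⟨∑ u ∈ {u | u ∈ T}, f u, sum_mem fun u _ => hfT u, ?_⟩
  ext v
  rw [mulVec_sum, Finset.sum_apply]
  simp only [hf, Pi.add_apply, Pi.single_apply, sum_add_distrib, sum_ite_eq, sum_boole,
    filter_filter, mem_filter, mem_univ, true_and, Set.indicator_apply, Pi.one_apply]
  rw [ZMod.natCast_eq_zero_iff_even.2 (hcard v), zero_add]

lemma exists_join_of_forall_even (hT : ∀ C, G.IsComponentOf T C → Even #C) :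
    ∃ K : Finset E, ↑K ⊆ G.edgesWithin T ∧ G.IsJoin T K := by
  obtain ⟨f, hfT, hf⟩ := exists_mulVec_eq_indicator hT
  refine ⟨({e | f e ≠ 0} : Finset E), fun e he => ?_, fun v => ?_⟩
  · by_contra h
    exact (mem_filter.1 he).2 (hfT e h)
  · rw [← ZMod.natCast_eq_one_iff_odd, natCast_degIn_filter_ne_zero, hf, Set.indicator_apply]
    by_cases hv : v ∈ T <;> simp [hv]

end Joins

variable {V E : Type} [Fintype V] [Fintype E] (G : Multigraph V E) (T : Set V)

theorem exists_join_within_iff :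
    (∃ K : Finset E, ↑K ⊆ G.edgesWithin T ∧ G.IsJoin T K) ↔
      ∀ C, G.IsComponentOf T C → Even #C :=
  ⟨fun ⟨_, hK, hjoin⟩ _ hC => even_card_of_isComponentOf hK (fun v => (hjoin v).2) hC,
    exists_join_of_forall_even⟩

end Multigraph

theorem stmt4 {V E : Type} [Fintype V] [Fintype E] (G : Multigraph V E) :
    (∃ F : Finset E, G.IsEvenSet F ∧ G.IsOddSet Fᶜ) ↔
    ∀ C : Finset V, G.IsComponentOf {v : V | Odd (G.deg v)} C → Even C.card := by
  rw [← exists_join_within_iff, compl_involutive.surjective.exists]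
  simp only [compl_compl, isEvenSet_compl_and_isOddSet_iff]
end

section
/- Every finite forest can be decomposed into two odd subgraphs. -/
/-
Removing an edge `xw` from a forest disconnects `x` from `w`. Decompose the smaller forest so
that all its edges at `x` get one colour, and likewise at `w`: the colour `b` later given to `xw`
if the remaining degree is even, the other colour if it is odd. Putting `xw` back then leaves
both colour classes odd at `x` and at `w`. This needs the strengthened statement in which a set
of roots, lying in distinct components, carries prescribed colours for all their edges; it is
proved by induction on the number of edges, removing an edge at a root whenever a root has one.
-/

open Finset
open scoped Classical

open Multigraph

variable {V : Type}

def IsOddAt (E : Finset (Sym2 V)) (v : V) : Prop :=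
  (∃ e ∈ E, v ∈ e) → Odd #{e ∈ E | v ∈ e}

lemma isOddAt_iff {E : Finset (Sym2 V)} {v : V} :
    IsOddAt E v ↔ #{e ∈ E | v ∈ e} = 0 ∨ Odd #{e ∈ E | v ∈ e} := by
  rw [IsOddAt, ← filter_nonempty_iff, ← card_pos, imp_iff_not_or, not_lt, Nat.le_zero]

lemma isOddAt_insert_iff {E : Finset (Sym2 V)} {e : Sym2 V} {v : V} (hv : v ∉ e) :
    IsOddAt (insert e E) v ↔ IsOddAt E v := by
  simp [IsOddAt, filter_insert, hv]

namespace SimpleGraph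

variable (G : SimpleGraph V)

def colorClass [Fintype G.edgeSet] (κ : Sym2 V → Bool) (b : Bool) : Finset (Sym2 V) :=
  {e ∈ G.edgeFinset | κ e = b}

def IsRootedOddColoring [Fintype G.edgeSet] (R : Set V) (c : V → Bool) (κ : Sym2 V → Bool) :
    Prop :=
  (∀ v ∉ R, ∀ b, IsOddAt (G.colorClass κ b) v) ∧ ∀ r ∈ R, ∀ e ∈ G.edgeSet, r ∈ e → κ e = c r

variable {G}

lemma pairwise_not_reachable_union_deleteEdges (hG : G.IsAcyclic) {R : Set V}
    (hR : R.Pairwise fun a b => ¬ G.Reachable a b) {x w : V} (hxw : G.Adj x w)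
    (hRx : ∀ r ∈ R, r ≠ x → r ≠ w → ¬ G.Reachable r x) :
    (R ∪ {y | y ∈ s(x, w)}).Pairwise fun a b => ¬ (G.deleteEdges {s(x, w)}).Reachable a b := by
  have hxw' : ¬ (G.deleteEdges {s(x, w)}).Reachable x w :=
    isBridge_iff.1 (isAcyclic_iff_forall_adj_isBridge.1 hG hxw)
  have hends : ∀ y ∈ s(x, w), ∀ y' ∈ s(x, w), y ≠ y' →
      ¬ (G.deleteEdges {s(x, w)}).Reachable y y' := by
    simp only [Sym2.mem_iff]
    rintro y (rfl | rfl) y' (rfl | rfl) h <;>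
      first | exact absurd rfl h | exact hxw' | exact fun h' => hxw' h'.symm
  have hcross : ∀ r ∈ R, ∀ y ∈ s(x, w), r ≠ y → ¬ (G.deleteEdges {s(x, w)}).Reachable r y := by
    intro r hr y hy hry hreach
    by_cases hre : r ∈ s(x, w)
    · exact hends r hre y hy hry hreach
    · have hyx : G.Reachable y x := by
        rcases Sym2.mem_iff.1 hy with rfl | rfl
        exacts [Reachable.refl y, hxw.symm.reachable]
      rw [Sym2.mem_iff, not_or] at hre
      exact hRx r hr hre.1 hre.2 ((hreach.mono (deleteEdges_le _)).trans hyx)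
  refine Set.pairwise_union.2 ⟨hR.mono' fun a b h h' => h (h'.mono (deleteEdges_le _)), hends,
    fun r hr y hy hry => ⟨hcross r hr y hy hry, fun h => hcross r hr y hy hry h.symm⟩⟩

/-- The edge `xw` removed in the induction: at a root if some root has an edge, and otherwise
anywhere, all roots being isolated then. -/
lemma exists_adj_of_edgeSet_nonempty (hE : G.edgeSet.Nonempty) {R : Set V}
    (hR : R.Pairwise fun a b => ¬ G.Reachable a b) (c : V → Bool) :
    ∃ x w b, G.Adj x w ∧ (∀ r ∈ R, r ≠ x → r ≠ w → ¬ G.Reachable r x) ∧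
      ∀ r ∈ R, r ∈ s(x, w) → c r = b := by
  by_cases hRE : ∃ r ∈ R, ∃ w, G.Adj r w
  · obtain ⟨x, hx, w, hxw⟩ := hRE
    refine ⟨x, w, c x, hxw, fun r hr hrx _ => hR hr hx hrx, fun r hr hrxw => ?_⟩
    rcases Sym2.mem_iff.1 hrxw with rfl | rfl
    · rfl
    · exact absurd hxw.reachable (hR hx hr hxw.ne)
  · push Not at hRE
    obtain ⟨e, he⟩ := hE
    induction e using Sym2.ind with | _ x w =>
    refine ⟨x, w, true, he, fun r hr hrx _ ⟨p⟩ => ?_, fun r hr hrxw => ?_⟩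
    · cases p with
      | nil => exact hrx rfl
      | cons h _ => exact hRE r hr _ h
    · rcases Sym2.mem_iff.1 hrxw with rfl | rfl
      exacts [absurd he (hRE r hr w), absurd he.symm (hRE r hr x)]

variable [Fintype G.edgeSet]

lemma edgeFinset_eq_insert_deleteEdges {e : Sym2 V} [Fintype (G.deleteEdges {e}).edgeSet]
    (he : e ∈ G.edgeSet) :
    G.edgeFinset = insert e (G.deleteEdges {e}).edgeFinset := by
  ext e'
  by_cases h : e' = e <;> simp [h, he]

lemma colorClass_update_deleteEdges {e : Sym2 V} [Fintype (G.deleteEdges {e}).edgeSet]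
    (he : e ∈ G.edgeSet) (κ : Sym2 V → Bool) (b b' : Bool) :
    G.colorClass (Function.update κ e b) b' = if b = b' then
      insert e ((G.deleteEdges {e}).colorClass κ b') else (G.deleteEdges {e}).colorClass κ b' := by
  have hcongr : ∀ e' ∈ (G.deleteEdges {e}).edgeFinset, Function.update κ e b e' = κ e' :=
    fun e' he' => Function.update_of_ne (by simp at he'; exact he'.2) _ _
  rw [colorClass, edgeFinset_eq_insert_deleteEdges he, filter_insert, Function.update_self,
    filter_congr fun e' he' => by rw [hcongr e' he'], colorClass]

lemma isOddAt_colorClass_update_of_forall_eq {e : Sym2 V} [Fintype (G.deleteEdges {e}).edgeSet]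
    (he : e ∈ G.edgeSet) {κ : Sym2 V → Bool} {b c : Bool} {y : V} (hye : y ∈ e)
    (hy : ∀ e' ∈ (G.deleteEdges {e}).edgeSet, y ∈ e' → κ e' = c)
    (hc : Even #{e' ∈ (G.deleteEdges {e}).edgeFinset | y ∈ e'} ↔ c = b) (b' : Bool) :
    IsOddAt (G.colorClass (Function.update κ e b) b') y := by
  have hstar : {e' ∈ (G.deleteEdges {e}).colorClass κ b' | y ∈ e'} =
      if c = b' then {e' ∈ (G.deleteEdges {e}).edgeFinset | y ∈ e'} else ∅ := by
    rw [colorClass, filter_filter, filter_congr fun e' he' => and_congr_left fun hye' => by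
      rw [hy e' (mem_edgeFinset.1 he') hye']]
    split_ifs with h <;> simp [h]
  have heG' : e ∉ {e' ∈ (G.deleteEdges {e}).colorClass κ b' | y ∈ e'} := by simp [colorClass]
  rw [isOddAt_iff, colorClass_update_deleteEdges he]
  split_ifs with hb
  · rw [filter_insert, if_pos hye, card_insert_of_notMem heG', hstar]
    subst hb
    split_ifs with hcb
    · exact Or.inr (hc.2 hcb).add_one
    · simp
  · rw [hstar]
    split_ifs with hcb
    · exact Or.inr (Nat.not_even_iff_odd.1 fun h => hb ((hc.1 h).symm.trans hcb))
    · simp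

lemma IsRootedOddColoring.update_of_deleteEdges {e : Sym2 V}
    [Fintype (G.deleteEdges {e}).edgeSet] (he : e ∈ G.edgeSet) {R : Set V} {c c' : V → Bool}
    {b : Bool} {κ : Sym2 V → Bool}
    (hκ : (G.deleteEdges {e}).IsRootedOddColoring (R ∪ {y | y ∈ e}) c' κ)
    (hc'R : ∀ r ∈ R, c' r = c r) (hb : ∀ r ∈ R, r ∈ e → c r = b)
    (hc'e : ∀ y ∈ e, y ∉ R →
      (Even #{e' ∈ (G.deleteEdges {e}).edgeFinset | y ∈ e'} ↔ c' y = b)) :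
    G.IsRootedOddColoring R c (Function.update κ e b) := by
  obtain ⟨hodd, hroot⟩ := hκ
  refine ⟨fun v hv b' => ?_, fun r hr e' he' hre' => ?_⟩
  · by_cases hve : v ∈ e
    · exact isOddAt_colorClass_update_of_forall_eq he hve
        (fun e' he' hve' => hroot v (Or.inr hve) e' he' hve') (hc'e v hve hv) b'
    · have hv' := hodd v (by simp [hv, hve]) b'
      rw [colorClass_update_deleteEdges he]
      split_ifs
      · rwa [isOddAt_insert_iff hve]
      · exact hv'
  · by_cases h : e' = e
    · rw [h, Function.update_self, hb r hr (h ▸ hre')]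
    · rw [Function.update_of_ne h, hroot r (Or.inl hr) e' (by simp [he', h]) hre', hc'R r hr]

theorem exists_isRootedOddColoring [Fintype V] (G : SimpleGraph V) [Fintype G.edgeSet]
    (hG : G.IsAcyclic) (R : Set V) (hR : R.Pairwise fun a b => ¬ G.Reachable a b)
    (c : V → Bool) : ∃ κ, G.IsRootedOddColoring R c κ := by
  by_cases hE : G.edgeSet = ∅
  · refine ⟨fun _ => true, fun v _ b => ?_, fun r _ e he => by simp [hE] at he⟩
    simp [IsOddAt, colorClass, edgeFinset, hE]
  obtain ⟨x, w, b, hxw, hRx, hb⟩ :=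
    exists_adj_of_edgeSet_nonempty (Set.nonempty_iff_ne_empty.2 hE) hR c
  obtain ⟨κ, hκ⟩ := exists_isRootedOddColoring (G.deleteEdges {s(x, w)})
    (hG.anti (deleteEdges_le _)) _ (pairwise_not_reachable_union_deleteEdges hG hR hxw hRx)
    fun y => if y ∈ R then c y
      else if Even #{e ∈ (G.deleteEdges {s(x, w)}).edgeFinset | y ∈ e} then b else !b
  refine ⟨_, hκ.update_of_deleteEdges hxw (fun r hr => if_pos hr) hb fun y _ hy => ?_⟩
  simp only [if_neg hy]
  split_ifs with h <;> simp [h]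
termination_by #G.edgeFinset
decreasing_by
  rw [edgeFinset_eq_insert_deleteEdges (G := G) (e := s(x, w)) hxw,
    card_insert_of_notMem (by simp)]
  exact Nat.lt_succ_self _

end SimpleGraph

theorem stmt17 {V : Type} [Fintype V] (F : SimpleGraph V) (hF : F.IsAcyclic) :
    ∃ E1 E2 : Finset (Sym2 V),
      (↑E1 ∪ ↑E2 : Set (Sym2 V)) = F.edgeSet ∧ Disjoint E1 E2 ∧
      (∀ v : V, (∃ e ∈ E1, v ∈ e) → Odd ((E1.filter (fun e => v ∈ e)).card)) ∧
      (∀ v : V, (∃ e ∈ E2, v ∈ e) → Odd ((E2.filter (fun e => v ∈ e)).card)) := by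
  obtain ⟨κ, hκ, -⟩ := F.exists_isRootedOddColoring hF ∅ (Set.pairwise_empty _) fun _ => true
  refine ⟨F.colorClass κ true, F.colorClass κ false, ?_, ?_,
    fun v => hκ v (Set.notMem_empty v) true, fun v => hκ v (Set.notMem_empty v) false⟩
  · ext e
    cases h : κ e <;> simp [SimpleGraph.colorClass, h]
  · exact disjoint_filter.2 fun e _ h1 h2 => by simp [h1] at h2
end
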